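/- Let (A_ℓ)_{ℓ≥0} be a sequence of p×p Hermitian matrices and ([a_ℓ, b_ℓ])_{ℓ≥0} a sequence of intervals such that: (i) no eigenvalue of A_ℓ lies in [a_ℓ, b_ℓ] for each ℓ; (ii) max_{k≤p} |λ_k(A_{ℓ+1}) − λ_k(A_ℓ)| < (b−a)/2 for each ℓ, where b − a ≤ b_ℓ − a_ℓ for all ℓ; (iii) a_{ℓ+1} ∈ (a_ℓ − (b_ℓ−a_ℓ)/2, (a_ℓ+b_ℓ)/2) and b_{ℓ+1} ∈ ((a_ℓ+b_ℓ)/2, b_ℓ + (b_ℓ−a_ℓ)/2). Then for every k ≤ p and every ℓ, the eigenvalue λ_k(A_ℓ) lies above b_ℓ if and only if λ_k(A_{ℓ+1}) lies above b_{ℓ+1}, and λ_k(A_ℓ) lies below a_ℓ if and only if λ_k(A_{ℓ+1}) lies below a_{ℓ+1}. In particular, the number of eigenvalues of A_ℓ above b_ℓ (resp. below a_ℓ) is constant in ℓ. -/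

import Mathlib

open Matrix

/-- `μ : Fin p → ℝ` lists the eigenvalues of the Hermitian matrix `A` in decreasing order. -/
def IsDecrEigenvalues {p : ℕ} {A : Matrix (Fin p) (Fin p) ℂ} (hA : A.IsHermitian)
    (μ : Fin p → ℝ) : Prop :=
  Antitone μ ∧ ∃ σ : Equiv.Perm (Fin p), ∀ k, μ k = hA.eigenvalues (σ k)

/-!
Both gaps `[a_ℓ, b_ℓ]` and `[a_{ℓ+1}, b_{ℓ+1}]` contain the midpoint `m` of the first one, so a
point outside either gap is above it iff it is above `m`. A point outside `[a_ℓ, b_ℓ]` is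
farther than `(b_ℓ - a_ℓ)/2` from `m`, so it cannot cross `m` by moving less than that; hence
`λ_k(A_ℓ)` and `λ_k(A_{ℓ+1})` lie on the same side of `m`.
-/

open Set

theorem lt_iff_lt_of_notMem_Icc {α : Type*} [LinearOrder α] {x a b c : α}
    (hx : x ∉ Icc a b) (hc : c ∈ Icc a b) : (b < x ↔ c < x) ∧ (x < a ↔ x < c) := by
  rw [mem_Icc, not_and_or, not_le, not_le] at hx
  obtain ⟨hac, hcb⟩ := hc
  constructor <;> constructor <;> intro h
  all_goals first
    | exact lt_of_le_of_lt hcb h | exact lt_of_lt_of_le h hac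
    | exact hx.resolve_left (not_lt.mpr (hac.trans h.le))
    | exact hx.resolve_right (not_lt.mpr (h.le.trans hcb))

theorem midpoint_lt_iff_of_abs_sub_lt {𝕜 : Type*} [Field 𝕜] [LinearOrder 𝕜]
    [IsStrictOrderedRing 𝕜] {x y a b : 𝕜} (hx : x ∉ Icc a b) (hxy : |y - x| < (b - a) / 2) :
    ((a + b) / 2 < x ↔ (a + b) / 2 < y) ∧ (x < (a + b) / 2 ↔ y < (a + b) / 2) := by
  rw [mem_Icc, not_and_or, not_le, not_le] at hx
  rw [abs_lt] at hxy
  rcases hx with hxa | hbx <;> constructor <;> constructor <;> intro h <;> linarith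

theorem above_gap_iff_of_abs_sub_lt {𝕜 : Type*} [Field 𝕜] [LinearOrder 𝕜]
    [IsStrictOrderedRing 𝕜] {x y a b a' b' : 𝕜} (hx : x ∉ Icc a b) (hy : y ∉ Icc a' b')
    (hxy : |y - x| < (b - a) / 2) (ha' : a' < (a + b) / 2) (hb' : (a + b) / 2 < b') :
    (b < x ↔ b' < y) ∧ (x < a ↔ y < a') := by
  have hm : (a + b) / 2 ∈ Icc a b := by
    have : a ≤ b := by linarith [(abs_nonneg (y - x)).trans_lt hxy]
    constructor <;> linarith
  obtain ⟨hx_above, hx_below⟩ := lt_iff_lt_of_notMem_Icc hx hm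
  obtain ⟨hy_above, hy_below⟩ := lt_iff_lt_of_notMem_Icc hy ⟨ha'.le, hb'.le⟩
  obtain ⟨h_above, h_below⟩ := midpoint_lt_iff_of_abs_sub_lt hx hxy
  exact ⟨hx_above.trans (h_above.trans hy_above.symm),
    hx_below.trans (h_below.trans hy_below.symm)⟩

theorem no_eigenvalue_jump_across_gap_general {p : ℕ}
    (μ : ℕ → Fin p → ℝ)
    (a b : ℝ) (aι bι : ℕ → ℝ)
    (hgap : ∀ ℓ, ∀ k, μ ℓ k ∉ Set.Icc (aι ℓ) (bι ℓ))
    (hclose : ∀ ℓ, ∀ k, |μ (ℓ + 1) k - μ ℓ k| < (b - a) / 2)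
    (hlen : ∀ ℓ, b - a ≤ bι ℓ - aι ℓ)
    (ha : ∀ ℓ, aι (ℓ + 1) ∈ Set.Ioo (aι ℓ - (bι ℓ - aι ℓ) / 2) ((aι ℓ + bι ℓ) / 2))
    (hb : ∀ ℓ, bι (ℓ + 1) ∈ Set.Ioo ((aι ℓ + bι ℓ) / 2) (bι ℓ + (bι ℓ - aι ℓ) / 2)) :
    (∀ ℓ, ∀ k, (bι ℓ < μ ℓ k ↔ bι (ℓ + 1) < μ (ℓ + 1) k)
        ∧ (μ ℓ k < aι ℓ ↔ μ (ℓ + 1) k < aι (ℓ + 1))) ∧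
    (∀ ℓ, (Finset.univ.filter fun k => bι ℓ < μ ℓ k).card
          = (Finset.univ.filter fun k => bι (ℓ + 1) < μ (ℓ + 1) k).card
        ∧ (Finset.univ.filter fun k => μ ℓ k < aι ℓ).card
          = (Finset.univ.filter fun k => μ (ℓ + 1) k < aι (ℓ + 1)).card) := by
  have side : ∀ ℓ k, (bι ℓ < μ ℓ k ↔ bι (ℓ + 1) < μ (ℓ + 1) k)
      ∧ (μ ℓ k < aι ℓ ↔ μ (ℓ + 1) k < aι (ℓ + 1)) := fun ℓ k =>
    above_gap_iff_of_abs_sub_lt (hgap ℓ k) (hgap (ℓ + 1) k)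
      ((hclose ℓ k).trans_le (by linarith [hlen ℓ])) (ha ℓ).2 (hb ℓ).1
  refine ⟨side, fun ℓ => ⟨?_, ?_⟩⟩
  · exact congrArg Finset.card (Finset.filter_congr fun k _ => (side ℓ k).1)
  · exact congrArg Finset.card (Finset.filter_congr fun k _ => (side ℓ k).2)

/-- Eigenvalues cannot jump across a persistent spectral gap: if each `A_ℓ` has no
eigenvalue in `[a_ℓ, b_ℓ]`, consecutive sorted eigenvalues differ by less than `(b−a)/2`
with `b − a ≤ b_ℓ − a_ℓ`, and consecutive intervals overlap suitably, then for every `k`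
and `ℓ` the `k`-th eigenvalue of `A_ℓ` is above `b_ℓ` iff that of `A_{ℓ+1}` is above
`b_{ℓ+1}` (similarly below `a_ℓ`), so the eigenvalue counts on each side are constant. -/
theorem no_eigenvalue_jump_across_gap {p : ℕ}
    (A : ℕ → Matrix (Fin p) (Fin p) ℂ) (hA : ∀ ℓ, (A ℓ).IsHermitian)
    (μ : ℕ → Fin p → ℝ) (hμ : ∀ ℓ, IsDecrEigenvalues (hA ℓ) (μ ℓ))
    (a b : ℝ) (aι bι : ℕ → ℝ)
    (hgap : ∀ ℓ, ∀ k, μ ℓ k ∉ Set.Icc (aι ℓ) (bι ℓ))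
    (hclose : ∀ ℓ, ∀ k, |μ (ℓ + 1) k - μ ℓ k| < (b - a) / 2)
    (hlen : ∀ ℓ, b - a ≤ bι ℓ - aι ℓ)
    (ha : ∀ ℓ, aι (ℓ + 1) ∈ Set.Ioo (aι ℓ - (bι ℓ - aι ℓ) / 2) ((aι ℓ + bι ℓ) / 2))
    (hb : ∀ ℓ, bι (ℓ + 1) ∈ Set.Ioo ((aι ℓ + bι ℓ) / 2) (bι ℓ + (bι ℓ - aι ℓ) / 2)) :
    (∀ ℓ, ∀ k, (bι ℓ < μ ℓ k ↔ bι (ℓ + 1) < μ (ℓ + 1) k)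
        ∧ (μ ℓ k < aι ℓ ↔ μ (ℓ + 1) k < aι (ℓ + 1))) ∧
    (∀ ℓ, (Finset.univ.filter fun k => bι ℓ < μ ℓ k).card
          = (Finset.univ.filter fun k => bι (ℓ + 1) < μ (ℓ + 1) k).card
        ∧ (Finset.univ.filter fun k => μ ℓ k < aι ℓ).card
          = (Finset.univ.filter fun k => μ (ℓ + 1) k < aι (ℓ + 1)).card) :=
  no_eigenvalue_jump_across_gap_general μ a b aι bι hgap hclose hlen ha hb
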